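/- arXiv:2510.13445 — 2 statements merged into one kernel-verified Lean document; each statement's English description precedes it below -/
import Mathlib

section
/- Let (Ω, P) be a probability space, h : Ω → ℝ with |h| ≤ 1, y : Ω → {−1,1}, ρ : Ω → [0,1] with P_noise = E[ρ] < 1/2 and Var(ρ) = E[(ρ − P_noise)²]. Then |E[y h (1 − 2ρ)]/(1 − 2P_noise) − E[y h]| ≤ 2√(Var(ρ))/(1 − 2P_noise). -/
/-!
Pointwise, `(1 - 2ρ) - (1 - 2c) = -2 (ρ - c)`, so the de-biased error equals
`-2 E[y h (ρ - c)] / (1 - 2c)`. Since `|y h| ≤ 1`, Cauchy–Schwarz (here: `Var ≥ 0` applied to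
`y h (ρ - c)`) bounds `|E[y h (ρ - c)]|` by `√E[(ρ - c)²]`.
-/

open MeasureTheory ProbabilityTheory

section

variable {Ω : Type*} [MeasurableSpace Ω] {μ : Measure Ω}

lemma sq_integral_le_integral_sq [IsProbabilityMeasure μ] {X : Ω → ℝ} (hX : MemLp X 2 μ) :
    (∫ ω, X ω ∂μ) ^ 2 ≤ ∫ ω, X ω ^ 2 ∂μ := by
  have hvar := variance_nonneg X μ
  rw [variance_eq_sub hX] at hvar
  simpa only [Pi.pow_apply, sub_nonneg] using hvar

lemma abs_integral_mul_le_sqrt_integral_sq [IsProbabilityMeasure μ] {g Z : Ω → ℝ}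
    (hg : AEStronglyMeasurable g μ) (hgb : ∀ᵐ ω ∂μ, |g ω| ≤ 1) (hZ : MemLp Z 2 μ) :
    |∫ ω, g ω * Z ω ∂μ| ≤ √(∫ ω, Z ω ^ 2 ∂μ) := by
  have hgZ : MemLp (fun ω => g ω * Z ω) 2 μ := hZ.of_le_mul (c := 1) (hg.mul hZ.1) <|
    hgb.mono fun ω hω => by simpa [abs_mul] using mul_le_mul_of_nonneg_right hω (abs_nonneg (Z ω))
  have hsq : ∫ ω, (g ω * Z ω) ^ 2 ∂μ ≤ ∫ ω, Z ω ^ 2 ∂μ := by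
    refine integral_mono_ae hgZ.integrable_sq hZ.integrable_sq (hgb.mono fun ω hω => ?_)
    simp only [mul_pow]
    have : g ω ^ 2 ≤ 1 := by nlinarith [abs_le.mp hω]
    nlinarith [sq_nonneg (Z ω)]
  exact Real.abs_le_sqrt ((sq_integral_le_integral_sq hgZ).trans hsq)

lemma integral_mul_one_sub_two_mul_sub {g ρ : Ω → ℝ} (c : ℝ) (hg : Integrable g μ)
    (hgρ : Integrable (fun ω => g ω * (1 - 2 * ρ ω)) μ) :
    ∫ ω, g ω * (1 - 2 * ρ ω) ∂μ - (1 - 2 * c) * ∫ ω, g ω ∂μ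
      = -2 * ∫ ω, g ω * (ρ ω - c) ∂μ := by
  rw [← integral_const_mul, ← integral_const_mul, ← integral_sub hgρ (hg.const_mul _)]
  congr 1
  funext ω
  ring

lemma abs_integral_debiased_sub_integral_le [IsProbabilityMeasure μ] {g ρ : Ω → ℝ} {c : ℝ}
    (hc : c < 1 / 2) (hg : AEStronglyMeasurable g μ) (hgb : ∀ᵐ ω ∂μ, |g ω| ≤ 1)
    (hρ : MemLp ρ 2 μ) :
    |(∫ ω, g ω * (1 - 2 * ρ ω) ∂μ) / (1 - 2 * c) - ∫ ω, g ω ∂μ|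
      ≤ 2 * √(∫ ω, (ρ ω - c) ^ 2 ∂μ) / (1 - 2 * c) := by
  have hpos : 0 < 1 - 2 * c := by linarith
  have hgb' : ∀ᵐ ω ∂μ, ‖g ω‖ ≤ 1 := hgb
  have hg_int : Integrable g μ := .of_bound hg 1 hgb'
  have hgρ_int : Integrable (fun ω => g ω * (1 - 2 * ρ ω)) μ :=
    ((integrable_const 1).sub ((hρ.integrable one_le_two).const_mul 2)).bdd_mul hg hgb'
  have hdiff : (∫ ω, g ω * (1 - 2 * ρ ω) ∂μ) / (1 - 2 * c) - ∫ ω, g ω ∂μ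
      = -2 * (∫ ω, g ω * (ρ ω - c) ∂μ) / (1 - 2 * c) := by
    rw [← integral_mul_one_sub_two_mul_sub c hg_int hgρ_int]
    field_simp
  rw [hdiff, abs_div, abs_mul, abs_neg, abs_two, abs_of_pos hpos]
  gcongr
  exact abs_integral_mul_le_sqrt_integral_sq hg hgb (hρ.sub (memLp_const c))

end

theorem debiased_noisy_expectation_bound_general {Ω : Type*} [MeasurableSpace Ω]
    (P : Measure Ω) [IsProbabilityMeasure P] (h y ρ : Ω → ℝ)
    (hh : Measurable h) (hhb : ∀ ω, |h ω| ≤ 1)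
    (hym : Measurable y) (hy : ∀ ω, y ω = 1 ∨ y ω = -1)
    (hρm : Measurable ρ) (hρ01 : ∀ ω, ρ ω ∈ Set.Icc (0:ℝ) 1)
    (Pnoise : ℝ) (hPlt : Pnoise < 1/2) :
    |(∫ ω, y ω * h ω * (1 - 2 * ρ ω) ∂P) / (1 - 2 * Pnoise)
        - ∫ ω, y ω * h ω ∂P|
      ≤ 2 * Real.sqrt (∫ ω, (ρ ω - Pnoise)^2 ∂P) / (1 - 2 * Pnoise) := by
  have hyh : ∀ ω, |y ω * h ω| ≤ 1 := fun ω => by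
    rcases hy ω with hyω | hyω <;> simpa [abs_mul, hyω] using hhb ω
  have hρ : MemLp ρ 2 P := .of_bound hρm.aestronglyMeasurable 1 <| .of_forall fun ω =>
    abs_le.mpr ⟨by linarith [(hρ01 ω).1], (hρ01 ω).2⟩
  exact abs_integral_debiased_sub_integral_le hPlt (hym.mul hh).aestronglyMeasurable
    (.of_forall hyh) hρ

theorem debiased_noisy_expectation_bound {Ω : Type*} [MeasurableSpace Ω]
    (P : Measure Ω) [IsProbabilityMeasure P] (h y ρ : Ω → ℝ)
    (hh : Measurable h) (hhb : ∀ ω, |h ω| ≤ 1)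
    (hym : Measurable y) (hy : ∀ ω, y ω = 1 ∨ y ω = -1)
    (hρm : Measurable ρ) (hρ01 : ∀ ω, ρ ω ∈ Set.Icc (0:ℝ) 1)
    (Pnoise : ℝ) (hP : Pnoise = ∫ ω, ρ ω ∂P) (hPlt : Pnoise < 1/2) :
    |(∫ ω, y ω * h ω * (1 - 2 * ρ ω) ∂P) / (1 - 2 * Pnoise)
        - ∫ ω, y ω * h ω ∂P|
      ≤ 2 * Real.sqrt (∫ ω, (ρ ω - Pnoise)^2 ∂P) / (1 - 2 * Pnoise) :=
  debiased_noisy_expectation_bound_general P h y ρ hh hhb hym hy hρm hρ01 Pnoise hPlt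
end

section
/- Let Ω be a finite set with probability measure P, y : Ω → {−1, 1}, ĥ : Ω → ℝᵀ with ‖ĥ(ω)‖∞ ≤ 1, μ ∈ ℝᵀ, τ ∈ ℝᵀ, λ > 0. Define F(μ) = 1/2 − ⟨τ, μ⟩ + λ‖μ‖₁, e = E[y ĥ], and suppose ‖e − τ‖∞ ≤ δ for some δ ≥ 0. Suppose |⟨ĥ(ω), μ⟩| ≤ 1/2 for all ω. Then R(h_μ) := E[1 − [y⟨ĥ, μ⟩ + 1/2]₀¹] ≤ F(μ) + (δ − λ)‖μ‖₁. -/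
/-! Under the margin constraint the clipping in the risk is inactive, so the risk is the linear
function `1/2 - ⟨e, μ⟩` of `μ`, where `e = E[y ĥ]`. Replacing `e` by `τ` costs at most
`‖e - τ‖∞ ‖μ‖₁ ≤ δ ‖μ‖₁` by Hölder's inequality. -/

open Finset

lemma min_max_add_half_eq_of_abs_le {x : ℝ} (hx : |x| ≤ 1/2) :
    min (max (x + 1/2) 0) 1 = x + 1/2 := by
  obtain ⟨hlo, hhi⟩ := abs_le.mp hx
  rw [max_eq_left (by linarith), min_eq_left (by linarith)]

lemma sum_mul_one_sub_clip_eq {Ω : Type*} [Fintype Ω] (p g : Ω → ℝ) (hsum : ∑ ω, p ω = 1)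
    (hg : ∀ ω, |g ω| ≤ 1/2) :
    ∑ ω, p ω * (1 - min (max (g ω + 1/2) 0) 1) = 1/2 - ∑ ω, p ω * g ω := by
  simp only [min_max_add_half_eq_of_abs_le (hg _)]
  calc ∑ ω, p ω * (1 - (g ω + 1/2)) = (∑ ω, p ω) * (1/2) - ∑ ω, p ω * g ω := by
        rw [sum_mul, ← sum_sub_distrib]
        exact sum_congr rfl fun ω _ => by ring
    _ = 1/2 - ∑ ω, p ω * g ω := by rw [hsum, one_mul]

lemma sum_mul_mul_sum_comm {Ω ι : Type*} [Fintype Ω] [Fintype ι] (p y : Ω → ℝ)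
    (f : Ω → ι → ℝ) (μ : ι → ℝ) :
    ∑ ω, p ω * (y ω * ∑ i, f ω i * μ i) = ∑ i, (∑ ω, p ω * (y ω * f ω i)) * μ i := by
  simp only [mul_sum, sum_mul, mul_assoc]
  exact sum_comm

lemma sum_mul_le_mul_sum_abs {ι : Type*} (s : Finset ι) (a b : ι → ℝ) {δ : ℝ}
    (ha : ∀ i ∈ s, |a i| ≤ δ) : ∑ i ∈ s, a i * b i ≤ δ * ∑ i ∈ s, |b i| := by
  rw [mul_sum]
  refine sum_le_sum fun i hi => ?_
  calc a i * b i ≤ |a i| * |b i| := by rw [← abs_mul]; exact le_abs_self _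
    _ ≤ δ * |b i| := mul_le_mul_of_nonneg_right (ha i hi) (abs_nonneg _)

theorem generalization_bound_finite_general {Ω : Type*} [Fintype Ω]
    (p : Ω → ℝ) (hsum : ∑ ω, p ω = 1)
    {T : ℕ} (y : Ω → ℝ) (hy : ∀ ω, y ω = 1 ∨ y ω = -1)
    (hb : Ω → Fin T → ℝ)
    (μ τ : Fin T → ℝ) (lam δ : ℝ)
    (he : ∀ i, |(∑ ω, p ω * (y ω * hb ω i)) - τ i| ≤ δ)
    (hmargin : ∀ ω, |∑ i, hb ω i * μ i| ≤ 1/2) :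
    ∑ ω, p ω * (1 - min (max (y ω * (∑ i, hb ω i * μ i) + 1/2) 0) 1)
      ≤ (1/2 - (∑ i, τ i * μ i) + lam * ∑ i, |μ i|)
          + (δ - lam) * ∑ i, |μ i| := by
  have hmargin_y : ∀ ω, |y ω * ∑ i, hb ω i * μ i| ≤ 1/2 := fun ω => by
    rw [abs_mul, (abs_eq zero_le_one).mpr (hy ω), one_mul]
    exact hmargin ω
  rw [sum_mul_one_sub_clip_eq p _ hsum hmargin_y, sum_mul_mul_sum_comm]
  have holder := sum_mul_le_mul_sum_abs univ (fun i => τ i - ∑ ω, p ω * (y ω * hb ω i)) μ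
    fun i _ => by rw [abs_sub_comm]; exact he i
  simp only [sub_mul, sum_sub_distrib] at holder
  linarith

theorem generalization_bound_finite {Ω : Type*} [Fintype Ω]
    (p : Ω → ℝ) (hp : ∀ ω, 0 ≤ p ω) (hsum : ∑ ω, p ω = 1)
    {T : ℕ} (y : Ω → ℝ) (hy : ∀ ω, y ω = 1 ∨ y ω = -1)
    (hb : Ω → Fin T → ℝ) (hbnd : ∀ ω i, |hb ω i| ≤ 1)
    (μ τ : Fin T → ℝ) (lam δ : ℝ) (hlam : 0 < lam) (hδ : 0 ≤ δ)
    (he : ∀ i, |(∑ ω, p ω * (y ω * hb ω i)) - τ i| ≤ δ)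
    (hmargin : ∀ ω, |∑ i, hb ω i * μ i| ≤ 1/2) :
    ∑ ω, p ω * (1 - min (max (y ω * (∑ i, hb ω i * μ i) + 1/2) 0) 1)
      ≤ (1/2 - (∑ i, τ i * μ i) + lam * ∑ i, |μ i|)
          + (δ - lam) * ∑ i, |μ i| :=
  generalization_bound_finite_general p hsum y hy hb μ τ lam δ he hmargin
end
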